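/- arXiv:2502.11849 — 2 statements merged into one kernel-verified Lean document; each statement's English description precedes it below -/
import Mathlib

section
/- (Tilt-excess lower bound for a Finsler dual norm) Let φ°: ℝ^d → [0,∞) come from a strongly convex positively 2-homogeneous function A via φ° = √A, with A satisfying A₀|p|² ≤ A(p) ≤ A₁|p|² and strong convexity. Let ψ̃ ∈ C^∞([0,∞)) with ψ̃ ≡ 0 on [0,1/4], ψ̃ ≡ 1 on [1/2,∞), ψ̃' ≥ 0. Then there exists c > 0, depending only on φ°, such that φ°(p) − |p'|ψ̃(|p'|)∇φ°(p')·p ≥ c|p − p'|² for all p, p' ∈ ℝ^d with |p| = 1 and |p'| ≤ 1. -/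
open scoped RealInnerProductSpace
open InnerProductSpace Set Asymptotics
set_option linter.unusedSectionVars false
set_option linter.unusedVariables false
set_option maxHeartbeats 400000

section auxTilt
variable {F : Type*} [NormedAddCommGroup F] [InnerProductSpace ℝ F] [CompleteSpace F]
variable {A : F → ℝ} {A₀ A₁ C₀ : ℝ}

private theorem my_grad_apply (f : F → ℝ) (x v : F) : ⟪gradient f x, v⟫ = fderiv ℝ f x v := by
  simp [gradient, InnerProductSpace.toDual_symm_apply]

private theorem my_A_zero (hAbound : ∀ p : F, A₀ * ‖p‖ ^ 2 ≤ A p ∧ A p ≤ A₁ * ‖p‖ ^ 2) :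
    A 0 = 0 := by
  have h := hAbound 0
  simp only [norm_zero] at h
  nlinarith [h.1, h.2]

private theorem my_diffAt_zero (hA₀ : 0 < A₀)
    (hAbound : ∀ p : F, A₀ * ‖p‖ ^ 2 ≤ A p ∧ A p ≤ A₁ * ‖p‖ ^ 2) :
    HasFDerivAt A (0 : F →L[ℝ] ℝ) 0 := by
  rw [hasFDerivAt_iff_isLittleO_nhds_zero]
  have h1 : (fun h : F => A h) =O[nhds 0] fun h : F => ‖h‖ ^ 2 := by
    apply IsBigO.of_bound A₁
    filter_upwards with h
    have hb := hAbound h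
    have h0 : 0 ≤ A h := le_trans (by positivity) hb.1
    rw [Real.norm_eq_abs, abs_of_nonneg h0, Real.norm_eq_abs]
    calc A h ≤ A₁ * ‖h‖ ^ 2 := hb.2
      _ ≤ A₁ * |‖h‖ ^ 2| := by rw [abs_of_nonneg (by positivity)]
  have h2 := h1.trans_isLittleO (isLittleO_norm_pow_id (E' := F) one_lt_two)
  simpa [my_A_zero hAbound] using h2

private theorem my_A_diff (hAC2 : ContDiffOn ℝ 2 A {p : F | p ≠ 0}) (hA₀ : 0 < A₀)
    (hAbound : ∀ p : F, A₀ * ‖p‖ ^ 2 ≤ A p ∧ A p ≤ A₁ * ‖p‖ ^ 2) :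
    ∀ x : F, DifferentiableAt ℝ A x := by
  intro x
  rcases eq_or_ne x 0 with rfl | hx
  · exact (my_diffAt_zero hA₀ hAbound).differentiableAt
  · have hct : ContDiffAt ℝ 2 A x := hAC2.contDiffAt (IsOpen.mem_nhds isOpen_ne hx)
    exact hct.differentiableAt two_ne_zero

private theorem my_euler (x : F) (hdiff : DifferentiableAt ℝ A x)
    (hAhom : ∀ (lam : ℝ) (p : F), 0 < lam → A (lam • p) = lam ^ 2 * A p) :
    fderiv ℝ A x x = 2 * A x := by
  have hline : HasDerivAt (fun t : ℝ => t • x) x 1 := by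
    simpa using (hasDerivAt_id (1 : ℝ)).smul_const x
  have h1 : HasDerivAt (fun t : ℝ => A (t • x)) (fderiv ℝ A x x) 1 := by
    have hfd : HasFDerivAt A (fderiv ℝ A x) ((1 : ℝ) • x) := by
      rw [one_smul]; exact hdiff.hasFDerivAt
    exact hfd.comp_hasDerivAt 1 hline
  have h2 : HasDerivAt (fun t : ℝ => t ^ 2 * A x) (2 * A x) 1 := by
    have := (hasDerivAt_pow 2 (1 : ℝ)).mul_const (A x)
    simpa using this
  have heq : (fun t : ℝ => t ^ 2 * A x) =ᶠ[nhds (1 : ℝ)] fun t => A (t • x) := by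
    filter_upwards [eventually_gt_nhds (by norm_num : (0 : ℝ) < 1)] with t ht
    exact (hAhom t x ht).symm
  exact h1.unique (h2.congr_of_eventuallyEq heq.symm)

private theorem my_fderiv_hom (x v : F) (lam : ℝ) (hlam : 0 < lam)
    (hdiff : ∀ y : F, DifferentiableAt ℝ A y)
    (hAhom : ∀ (lam : ℝ) (p : F), 0 < lam → A (lam • p) = lam ^ 2 * A p) :
    fderiv ℝ A (lam • x) v = lam * fderiv ℝ A x v := by
  have hsm : HasFDerivAt (fun y : F => lam • y) (lam • ContinuousLinearMap.id ℝ F) x := by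
    have := (lam • ContinuousLinearMap.id ℝ F).hasFDerivAt (x := x)
    exact this
  have h1 : HasFDerivAt (fun y : F => A (lam • y))
      ((fderiv ℝ A (lam • x)).comp (lam • ContinuousLinearMap.id ℝ F)) x :=
    (hdiff (lam • x)).hasFDerivAt.comp x hsm
  have h2 : HasFDerivAt (fun y : F => lam ^ 2 * A y) ((lam ^ 2) • fderiv ℝ A x) x :=
    (hdiff x).hasFDerivAt.const_mul (lam ^ 2)
  have hfun : (fun y : F => A (lam • y)) = fun y : F => lam ^ 2 * A y := by
    funext y; exact hAhom lam y hlam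
  have huniq := h1.unique (hfun ▸ h2)
  have hv := congrFun (congrArg (fun L : F →L[ℝ] ℝ => (L : F → ℝ)) huniq) v
  simp only [ContinuousLinearMap.coe_comp', Function.comp_apply,
    ContinuousLinearMap.smul_apply, ContinuousLinearMap.coe_smul',
    Pi.smul_apply, ContinuousLinearMap.coe_id', id_eq, smul_eq_mul] at hv
  have hmap : fderiv ℝ A (lam • x) (lam • v) = lam * fderiv ℝ A (lam • x) v := by
    rw [map_smul]; rfl
  rw [hmap] at hv
  have hlam' : lam ≠ 0 := ne_of_gt hlam
  have key : lam * (fderiv ℝ A (lam • x) v) = lam * (lam * fderiv ℝ A x v) := by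
    rw [hv]; ring
  exact mul_left_cancel₀ hlam' key

private theorem my_strong_convex (hdiff : ∀ x : F, DifferentiableAt ℝ A x) (hC₀ : 0 < C₀)
    (hAconv : ∀ p q : F, p ≠ q → ⟪gradient A p - gradient A q, p - q⟫ ≥ C₀ * ‖p - q‖ ^ 2)
    (u v : F) : A v + ⟪gradient A v, u - v⟫ + C₀ / 2 * ‖u - v‖ ^ 2 ≤ A u := by
  rcases eq_or_ne u v with rfl | huv
  · simp
  set w := u - v with hw
  have hw0 : w ≠ 0 := sub_ne_zero.mpr huv
  have hderiv : ∀ t : ℝ,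
      HasDerivAt (fun s : ℝ => A (v + s • w)) ⟪gradient A (v + t • w), w⟫ t := by
    intro t
    have hline : HasDerivAt (fun s : ℝ => v + s • w) w t := by
      simpa using ((hasDerivAt_id t).smul_const w).const_add v
    have h := (hdiff (v + t • w)).hasFDerivAt.comp_hasDerivAt t hline
    rw [my_grad_apply]
    exact h
  set g : ℝ → ℝ := fun t => A (v + t • w) - t * ⟪gradient A v, w⟫ - C₀ / 2 * t ^ 2 * ‖w‖ ^ 2
    with hg
  have hgd : ∀ t : ℝ, HasDerivAt g
      (⟪gradient A (v + t • w), w⟫ - ⟪gradient A v, w⟫ - C₀ * t * ‖w‖ ^ 2) t := by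
    intro t
    have h2 : HasDerivAt (fun s : ℝ => s * ⟪gradient A v, w⟫) ⟪gradient A v, w⟫ t := by
      simpa using (hasDerivAt_id t).mul_const (⟪gradient A v, w⟫)
    have h3 : HasDerivAt (fun s : ℝ => C₀ / 2 * s ^ 2 * ‖w‖ ^ 2) (C₀ * t * ‖w‖ ^ 2) t := by
      have := ((hasDerivAt_pow 2 t).const_mul (C₀ / 2)).mul_const (‖w‖ ^ 2)
      refine this.congr_deriv ?_
      ring
    exact ((hderiv t).sub h2).sub h3
  have hder_nonneg : ∀ t ∈ interior (Icc (0 : ℝ) 1), 0 ≤ deriv g t := by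
    intro t ht
    rw [interior_Icc, mem_Ioo] at ht
    rw [(hgd t).deriv]
    have hne : v + t • w ≠ v := by
      intro h
      apply hw0
      have htw : t • w = 0 := by
        have := congrArg (fun z => z - v) h
        simpa using this
      rcases smul_eq_zero.mp htw with h' | h'
      · exact absurd h' (ne_of_gt ht.1)
      · exact h'
    have hc := hAconv (v + t • w) v hne
    have hsimp : v + t • w - v = t • w := by abel
    rw [hsimp] at hc
    rw [inner_sub_left, real_inner_smul_right, real_inner_smul_right] at hc
    have hnorm : ‖t • w‖ ^ 2 = t ^ 2 * ‖w‖ ^ 2 := by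
      rw [norm_smul, Real.norm_eq_abs, mul_pow, sq_abs]
    rw [hnorm] at hc
    have ht0 : 0 < t := ht.1
    nlinarith [hc]
  have hdiffg : Differentiable ℝ g := fun t => (hgd t).differentiableAt
  have hmono : MonotoneOn g (Icc (0 : ℝ) 1) :=
    monotoneOn_of_deriv_nonneg (convex_Icc 0 1) hdiffg.continuous.continuousOn
      hdiffg.differentiableOn hder_nonneg
  have h01 := hmono (left_mem_Icc.mpr zero_le_one) (right_mem_Icc.mpr zero_le_one) zero_le_one
  have hg0 : g 0 = A v := by simp [hg]
  have hg1 : g 1 = A u - ⟪gradient A v, w⟫ - C₀ / 2 * ‖w‖ ^ 2 := by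
    have h1 : v + (1 : ℝ) • w = u := by rw [one_smul, hw]; abel
    rw [hg]; simp only [h1, one_pow]; ring
  rw [hg0, hg1] at h01
  linarith

private theorem my_grad_sqrt (p' : F) (hdiff : DifferentiableAt ℝ A p') (hApos : 0 < A p') :
    gradient (fun q => Real.sqrt (A q)) p' = (1 / (2 * Real.sqrt (A p'))) • gradient A p' := by
  have h := hdiff.hasFDerivAt.sqrt (ne_of_gt hApos)
  have h2 : HasGradientAt (fun q => Real.sqrt (A q))
      ((1 / (2 * Real.sqrt (A p'))) • gradient A p') p' := by
    rw [hasGradientAt_iff_hasFDerivAt]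
    have heq : (InnerProductSpace.toDual ℝ F) ((1 / (2 * Real.sqrt (A p'))) • gradient A p')
        = (1 / (2 * Real.sqrt (A p'))) • fderiv ℝ A p' := by
      rw [map_smul]
      congr 1
      simp [gradient]
    rw [heq]
    exact h
  exact h2.gradient

end auxTilt

theorem tilt_excess_lower_bound {d : ℕ}
    (A : EuclideanSpace ℝ (Fin d) → ℝ)
    (hAC2 : ContDiffOn ℝ 2 A {p | p ≠ 0})
    (A₀ A₁ : ℝ) (hA₀ : 0 < A₀) (hA₀₁ : A₀ ≤ A₁)
    (hAbound : ∀ p : EuclideanSpace ℝ (Fin d),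
        A₀ * ‖p‖ ^ 2 ≤ A p ∧ A p ≤ A₁ * ‖p‖ ^ 2)
    (hAhom : ∀ (lam : ℝ) (p : EuclideanSpace ℝ (Fin d)), 0 < lam →
        A (lam • p) = lam ^ 2 * A p)
    (C₀ : ℝ) (hC₀ : 0 < C₀)
    (hAconv : ∀ p q : EuclideanSpace ℝ (Fin d), p ≠ q →
        ⟪gradient A p - gradient A q, p - q⟫ ≥ C₀ * ‖p - q‖ ^ 2)
    (ψt : ℝ → ℝ) (hψt : ContDiff ℝ (⊤ : ℕ∞) ψt)
    (hψt0 : ∀ r : ℝ, r ≤ 1 / 4 → ψt r = 0)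
    (hψt1 : ∀ r : ℝ, 1 / 2 ≤ r → ψt r = 1)
    (hψtmono : ∀ r : ℝ, 0 ≤ r → 0 ≤ deriv ψt r) :
    ∃ c : ℝ, 0 < c ∧
      ∀ p p' : EuclideanSpace ℝ (Fin d), ‖p‖ = 1 → ‖p'‖ ≤ 1 →
        Real.sqrt (A p) - ‖p'‖ * ψt ‖p'‖ *
            ⟪gradient (fun q => Real.sqrt (A q)) p', p⟫ ≥
          c * ‖p - p'‖ ^ 2 := by
  have hA₁ : 0 < A₁ := lt_of_lt_of_le hA₀ hA₀₁
  have hdiff : ∀ x : EuclideanSpace ℝ (Fin d), DifferentiableAt ℝ A x :=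
    my_A_diff hAC2 hA₀ hAbound
  -- ψ basic bounds
  have hψdiff : Differentiable ℝ ψt := hψt.differentiable (by simp)
  have hψmono : MonotoneOn ψt (Ici (0 : ℝ)) :=
    monotoneOn_of_deriv_nonneg (convex_Ici 0) hψdiff.continuous.continuousOn
      hψdiff.differentiableOn
      (fun r hr => by rw [interior_Ici] at hr; exact hψtmono r (le_of_lt hr))
  have hψ01 : ∀ r : ℝ, 0 ≤ r → 0 ≤ ψt r ∧ ψt r ≤ 1 := by
    intro r hr
    constructor
    · rcases le_or_gt r (1 / 4) with h | h
      · rw [hψt0 r h]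
      · have h4 : (0 : ℝ) ≤ 1 / 4 := by norm_num
        have := hψmono (mem_Ici.mpr h4) (mem_Ici.mpr hr) (le_of_lt h)
        rwa [hψt0 (1 / 4) le_rfl] at this
    · rcases le_or_gt (1 / 2) r with h | h
      · rw [hψt1 r h]
      · have := hψmono (mem_Ici.mpr hr) (mem_Ici.mpr (by norm_num)) (le_of_lt h)
        rwa [hψt1 (1 / 2) le_rfl] at this
  set sa0 := Real.sqrt A₀ with hsa0def
  set sa1 := Real.sqrt A₁ with hsa1def
  have hsa0 : 0 < sa0 := Real.sqrt_pos.mpr hA₀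
  have hsa1 : 0 < sa1 := Real.sqrt_pos.mpr hA₁
  have hsa0sq : sa0 ^ 2 = A₀ := Real.sq_sqrt hA₀.le
  have hsa1sq : sa1 ^ 2 = A₁ := Real.sq_sqrt hA₁.le
  have hsa01 : sa0 ≤ sa1 := Real.sqrt_le_sqrt hA₀₁
  obtain ⟨c, hcpos, hc16, hc2, hc3⟩ : ∃ c : ℝ, 0 < c ∧ c ≤ sa0 / 16 ∧
      c ≤ sa0 ^ 2 / (2 * sa1) ∧ c ≤ 3 * C₀ * sa0 / (32 * A₁) :=
    ⟨min (sa0 / 16) (min (sa0 ^ 2 / (2 * sa1)) (3 * C₀ * sa0 / (32 * A₁))),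
      lt_min (by positivity) (lt_min (by positivity) (by positivity)),
      min_le_left _ _, le_trans (min_le_right _ _) (min_le_left _ _),
      le_trans (min_le_right _ _) (min_le_right _ _)⟩
  refine ⟨c, hcpos, ?_⟩
  intro p p' hp hp'
  have hApb := hAbound p
  rw [hp, one_pow, mul_one, mul_one] at hApb
  set a := Real.sqrt (A p) with ha
  have hA_p_pos : 0 < A p := lt_of_lt_of_le hA₀ hApb.1
  have ha_pos : 0 < a := Real.sqrt_pos.mpr hA_p_pos
  have hasq : a ^ 2 = A p := Real.sq_sqrt hA_p_pos.le
  have ha_low : sa0 ≤ a := Real.sqrt_le_sqrt hApb.1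
  have ha_high : a ≤ sa1 := Real.sqrt_le_sqrt hApb.2
  set G := ⟪gradient (fun q => Real.sqrt (A q)) p', p⟫ with hGdef
  -- key inequality from strong convexity, for p' ≠ 0
  have key : ∀ lam : ℝ, 0 < lam → lam * Real.sqrt (A p') = a → p' ≠ 0 →
      2 * a * G ≤ 2 * a ^ 2 - C₀ / 2 * ‖p - lam • p'‖ ^ 2 := by
    intro lam hlam_pos hlamb hp'0
    set b := Real.sqrt (A p') with hbdef
    have hnp' : 0 < ‖p'‖ := norm_pos_iff.mpr hp'0
    have hAp'pos : 0 < A p' := lt_of_lt_of_le (by positivity) (hAbound p').1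
    have hb : 0 < b := Real.sqrt_pos.mpr hAp'pos
    have hbsq : b ^ 2 = A p' := Real.sq_sqrt hAp'pos.le
    have hgrad : gradient (fun q => Real.sqrt (A q)) p' = (1 / (2 * b)) • gradient A p' :=
      my_grad_sqrt p' (hdiff p') hAp'pos
    set I := ⟪gradient A p', p⟫ with hI
    have hG : G = 1 / (2 * b) * I := by rw [hGdef, hgrad, real_inner_smul_left]
    have hAlam : A (lam • p') = a ^ 2 := by
      rw [hAhom lam p' hlam_pos, ← hbsq]
      calc lam ^ 2 * b ^ 2 = (lam * b) ^ 2 := by ring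
        _ = a ^ 2 := by rw [hlamb]
    have heuler : fderiv ℝ A p' p' = 2 * A p' := my_euler p' (hdiff p') hAhom
    have hginner : ⟪gradient A (lam • p'), p - lam • p'⟫ = lam * I - 2 * a ^ 2 := by
      rw [my_grad_apply, my_fderiv_hom p' (p - lam • p') lam hlam_pos hdiff hAhom]
      rw [map_sub, map_smul]
      have h1 : fderiv ℝ A p' p = I := (my_grad_apply A p' p).symm
      rw [h1]
      simp only [smul_eq_mul, heuler]
      rw [← hbsq]
      have : lam * (lam * (2 * b ^ 2)) = 2 * (lam * b) ^ 2 := by ring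
      rw [mul_sub, this, hlamb]
      all_goals ring
    have hsc := my_strong_convex hdiff hC₀ hAconv p (lam • p')
    rw [hAlam, hginner] at hsc
    have h2aG : 2 * a * G = lam * I := by
      rw [hG, ← hlamb]
      field_simp
      all_goals ring
    rw [h2aG]
    rw [← hasq] at hsc
    linarith
  rcases le_or_gt ‖p'‖ (3 / 4 : ℝ) with hcase | hcase
  · -- small p': use a(1-s) ≥ sa0/4
    rcases le_or_gt ‖p'‖ (1 / 4 : ℝ) with hc1 | hc1
    · rw [hψt0 ‖p'‖ hc1]
      have hpp' : ‖p - p'‖ ≤ 2 := by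
        calc ‖p - p'‖ ≤ ‖p‖ + ‖p'‖ := norm_sub_le p p'
          _ ≤ 2 := by rw [hp]; linarith
      have hnn : (0 : ℝ) ≤ ‖p - p'‖ := norm_nonneg _
      rw [mul_zero, zero_mul, sub_zero, ge_iff_le]
      have hsq4 : ‖p - p'‖ ^ 2 ≤ 4 := by nlinarith only [hpp', hnn]
      have := mul_le_mul hc16 hsq4 (sq_nonneg _) (by positivity : (0:ℝ) ≤ sa0 / 16)
      linarith [ha_low, hsa0]
    · have hp'0 : p' ≠ 0 := by
        intro h; rw [h, norm_zero] at hc1; norm_num at hc1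
      have hAp'pos : 0 < A p' :=
        lt_of_lt_of_le (by positivity) (hAbound p').1
      have hbp : 0 < Real.sqrt (A p') := Real.sqrt_pos.mpr hAp'pos
      have hkey := key (a / Real.sqrt (A p')) (div_pos ha_pos hbp)
        (by field_simp) hp'0
      have hR20 : (0 : ℝ) ≤ ‖p - (a / Real.sqrt (A p')) • p'‖ ^ 2 := by positivity
      have hGa : G ≤ a := by
        have h2a : (0:ℝ) < 2 * a := by positivity
        have hCR : 0 ≤ C₀ / 2 * ‖p - (a / Real.sqrt (A p')) • p'‖ ^ 2 :=
          mul_nonneg (by linarith) hR20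
        exact (mul_le_mul_iff_of_pos_left h2a).mp (by linarith : 2 * a * G ≤ 2 * a * a)
      have hψb := hψ01 ‖p'‖ (norm_nonneg p')
      set s := ‖p'‖ * ψt ‖p'‖ with hs
      have hs0 : 0 ≤ s := mul_nonneg (norm_nonneg p') hψb.1
      have hs34 : s ≤ 3 / 4 := by
        have := mul_nonneg (norm_nonneg p') (by linarith [hψb.2] : (0:ℝ) ≤ 1 - ψt ‖p'‖)
        linarith [this, hcase]
      have hsG : s * G ≤ s * a := mul_le_mul_of_nonneg_left hGa hs0
      have hpp' : ‖p - p'‖ ≤ 2 := by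
        calc ‖p - p'‖ ≤ ‖p‖ + ‖p'‖ := norm_sub_le p p'
          _ ≤ 2 := by rw [hp]; linarith
      have hnn : (0 : ℝ) ≤ ‖p - p'‖ := norm_nonneg _
      rw [ge_iff_le]
      have hsq4 : ‖p - p'‖ ^ 2 ≤ 4 := by nlinarith only [hpp', hnn]
      have h1 := mul_le_mul hc16 hsq4 (sq_nonneg _) (by positivity : (0:ℝ) ≤ sa0 / 16)
      have h2 : 0 ≤ a * (3 / 4 - s) := mul_nonneg ha_pos.le (by linarith)
      linarith [h1, h2, hsG, ha_low]
  · -- large p'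
    have hp'0 : p' ≠ 0 := by
      intro h; rw [h, norm_zero] at hcase; norm_num at hcase
    have hψ1 : ψt ‖p'‖ = 1 := hψt1 _ (by linarith)
    rw [hψ1, mul_one]
    set n := ‖p'‖ with hn
    have hn0 : 0 < n := by linarith
    have hn1 : n ≤ 1 := hp'
    set b := Real.sqrt (A p') with hbdef
    have hAp'pos : 0 < A p' := lt_of_lt_of_le (by positivity) (hAbound p').1
    have hb : 0 < b := Real.sqrt_pos.mpr hAp'pos
    have hbsq : b ^ 2 = A p' := Real.sq_sqrt hAp'pos.le
    have hb_up : b ≤ sa1 * n := by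
      have h1 : A p' ≤ A₁ * n ^ 2 := (hAbound p').2
      calc b ≤ Real.sqrt (A₁ * n ^ 2) := Real.sqrt_le_sqrt h1
        _ = sa1 * n := by
          rw [Real.sqrt_mul hA₁.le, Real.sqrt_sq hn0.le]
    obtain ⟨lam, hlam_pos, hlamb⟩ : ∃ l : ℝ, 0 < l ∧ l * b = a :=
      ⟨a / b, div_pos ha_pos hb, by field_simp⟩
    have hkey := key lam hlam_pos hlamb hp'0
    obtain ⟨μ, hμpos, hμb, hμlam⟩ : ∃ m : ℝ, 0 < m ∧ m * b = a * n ∧ m = lam * n :=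
      ⟨lam * n, mul_pos hlam_pos hn0, by linear_combination n * hlamb, rfl⟩
    have hμsa : sa0 ≤ μ * sa1 := by
      nlinarith only [mul_nonneg hμpos.le (sub_nonneg.mpr hb_up),
        mul_nonneg (sub_nonneg.mpr ha_low) hn0.le, hμb, hn0, hsa0, hsa1, hμpos]
    set q := (n⁻¹ : ℝ) • p' with hqdef
    have hq1 : ‖q‖ = 1 := by
      rw [hqdef, norm_smul, norm_inv, Real.norm_eq_abs, abs_of_pos hn0, ← hn]
      field_simp
    have hp'q : p' = n • q := by
      rw [hqdef, smul_smul, mul_inv_cancel₀ (ne_of_gt hn0), one_smul]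
    have hlamp' : lam • p' = μ • q := by
      rw [hμlam]
      nth_rewrite 1 [hp'q]
      rw [smul_smul]
    have hR2eq : ‖p - μ • q‖ ^ 2 = (1 - μ) ^ 2 + μ * ‖p - q‖ ^ 2 := by
      have e1 : ‖p - μ • q‖ ^ 2 = ‖p‖ ^ 2 - 2 * ⟪p, μ • q⟫ + ‖μ • q‖ ^ 2 :=
        norm_sub_sq_real p (μ • q)
      have e2 : ‖p - q‖ ^ 2 = ‖p‖ ^ 2 - 2 * ⟪p, q⟫ + ‖q‖ ^ 2 := norm_sub_sq_real p q
      rw [e1, real_inner_smul_right, norm_smul, Real.norm_eq_abs, abs_of_pos hμpos,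
        hp, hq1, e2, hp, hq1]
      ring
    have hQR : μ * ‖p - q‖ ^ 2 ≤ ‖p - lam • p'‖ ^ 2 := by
      rw [hlamp', hR2eq]
      linarith [sq_nonneg (1 - μ)]
    have hqp' : ‖q - p'‖ = 1 - n := by
      have e1 : q - p' = (1 - n) • q := by
        nth_rewrite 1 [hp'q]
        rw [sub_smul, one_smul]
      rw [e1, norm_smul, hq1, mul_one, Real.norm_eq_abs, abs_of_nonneg (by linarith)]
    have htri : ‖p - p'‖ ≤ ‖p - q‖ + (1 - n) := by
      have e1 : p - p' = (p - q) + (q - p') := by abel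
      rw [e1]
      calc ‖(p - q) + (q - p')‖ ≤ ‖p - q‖ + ‖q - p'‖ := norm_add_le _ _
        _ = ‖p - q‖ + (1 - n) := by rw [hqp']
    have hPP : ‖p - p'‖ ^ 2 ≤ 2 * ‖p - q‖ ^ 2 + 2 * (1 - n) ^ 2 := by
      have h1 : ‖p - p'‖ ^ 2 ≤ (‖p - q‖ + (1 - n)) ^ 2 :=
        pow_le_pow_left₀ (norm_nonneg _) htri 2
      linarith [h1, sq_nonneg (‖p - q‖ - (1 - n))]
    -- clear denominators in c bounds
    have hc2' : c * (2 * sa1) ≤ sa0 ^ 2 := (le_div_iff₀ (by positivity)).mp hc2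
    have hc3' : c * (32 * sa1 ^ 2) ≤ 3 * C₀ * sa0 := by
      rw [hsa1sq]
      exact (le_div_iff₀ (by positivity)).mp hc3
    set Q := ‖p - q‖ ^ 2 with hQdef
    have hQ0 : (0 : ℝ) ≤ Q := sq_nonneg _
    set R2 := ‖p - lam • p'‖ ^ 2 with hR2def
    have hR20 : (0 : ℝ) ≤ R2 := sq_nonneg _
    have hsa1R : sa0 * Q ≤ sa1 * R2 := by
      have h1 := mul_le_mul_of_nonneg_right hμsa hQ0
      have h2 := mul_le_mul_of_nonneg_left hQR hsa1.le
      linarith [h1, h2]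
    have hterm1 : 4 * sa1 * c * Q ≤ C₀ / 2 * n * R2 := by
      have h8 : 0 ≤ (C₀ / 2 * n * R2 - 4 * sa1 * c * Q) * (8 * sa1) := by
        have X1 := mul_le_mul_of_nonneg_right hc3' hQ0
        have X2 := mul_le_mul_of_nonneg_left hsa1R (by positivity : (0:ℝ) ≤ 3 * C₀)
        have X3 : 0 ≤ (n - 3 / 4) * (4 * C₀ * sa1 * R2) :=
          mul_nonneg (by linarith) (by positivity)
        linarith [X1, X2, X3]
      have := (mul_nonneg_iff_of_pos_right (by positivity : (0:ℝ) < 8 * sa1)).mp h8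
      linarith
    have hterm2 : 4 * sa1 * c * (1 - n) ^ 2 ≤ 2 * a ^ 2 * (1 - n) := by
      have X1 := mul_le_mul_of_nonneg_right hc2' (sq_nonneg (1 - n))
      have X2 : 0 ≤ sa0 ^ 2 * ((1 - n) - (1 - n) ^ 2) := by
        apply mul_nonneg (by positivity)
        nlinarith only [hn0, hn1]
      have X3 : 0 ≤ (a ^ 2 - sa0 ^ 2) * (1 - n) := by
        apply mul_nonneg (by nlinarith only [ha_low, hsa0]) (by linarith)
      linarith [X1, X2, X3]
    have hP0 : (0:ℝ) ≤ ‖p - p'‖ ^ 2 := sq_nonneg _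
    have hPterm : 2 * a * (c * ‖p - p'‖ ^ 2) ≤
        4 * sa1 * c * Q + 4 * sa1 * c * (1 - n) ^ 2 := by
      have X1 : 0 ≤ (sa1 - a) * (2 * c * ‖p - p'‖ ^ 2) :=
        mul_nonneg (sub_nonneg.mpr ha_high) (by positivity)
      have X2 : 0 ≤ (2 * sa1 * c) * (2 * Q + 2 * (1 - n) ^ 2 - ‖p - p'‖ ^ 2) :=
        mul_nonneg (by positivity) (by linarith [hPP])
      linarith [X1, X2]
    have hfin : 2 * a ^ 2 * (1 - n) + C₀ / 2 * n * R2 ≤ 2 * a * (a - n * G) := by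
      have X1 := mul_le_mul_of_nonneg_left hkey hn0.le
      linarith [X1]
    rw [ge_iff_le, ← mul_le_mul_iff_of_pos_left (show (0:ℝ) < 2 * a by positivity)]
    linarith [hterm1, hterm2, hPterm, hfin]
end

section
/- (Tilt-excess upper bound) Under the same hypotheses, there exists C > 0 depending only on φ° such that φ°(p) − |p'|ψ̃(|p'|)∇φ°(p')·p ≤ C(|p − p'|² + (1 − |p'|)) for all p, p' ∈ ℝ^d with |p| = 1 and |p'| ≤ 1. -/
open scoped RealInnerProductSpace

set_option maxHeartbeats 2000000 in
theorem tilt_excess_upper_bound {d : ℕ}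
    (A : EuclideanSpace ℝ (Fin d) → ℝ)
    (hAC2 : ContDiffOn ℝ 2 A {p | p ≠ 0})
    (A₀ A₁ : ℝ) (hA₀ : 0 < A₀) (hA₀₁ : A₀ ≤ A₁)
    (hAbound : ∀ p : EuclideanSpace ℝ (Fin d),
        A₀ * ‖p‖ ^ 2 ≤ A p ∧ A p ≤ A₁ * ‖p‖ ^ 2)
    (hAhom : ∀ (lam : ℝ) (p : EuclideanSpace ℝ (Fin d)), 0 < lam →
        A (lam • p) = lam ^ 2 * A p)
    (C₀ : ℝ) (hC₀ : 0 < C₀)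
    (hAconv : ∀ p q : EuclideanSpace ℝ (Fin d), p ≠ q →
        ⟪gradient A p - gradient A q, p - q⟫ ≥ C₀ * ‖p - q‖ ^ 2)
    (ψt : ℝ → ℝ) (hψt : ContDiff ℝ (⊤ : ℕ∞) ψt)
    (hψt0 : ∀ r : ℝ, r ≤ 1 / 4 → ψt r = 0)
    (hψt1 : ∀ r : ℝ, 1 / 2 ≤ r → ψt r = 1)
    (hψtmono : ∀ r : ℝ, 0 ≤ r → 0 ≤ deriv ψt r) :
    ∃ C : ℝ, 0 < C ∧
      ∀ p p' : EuclideanSpace ℝ (Fin d), ‖p‖ = 1 → ‖p'‖ ≤ 1 →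
        Real.sqrt (A p) - ‖p'‖ * ψt ‖p'‖ *
            ⟪gradient (fun q => Real.sqrt (A q)) p', p⟫ ≤
          C * (‖p - p'‖ ^ 2 + (1 - ‖p'‖)) := by
  classical
  have hU : IsOpen {x : EuclideanSpace ℝ (Fin d) | x ≠ 0} := isOpen_ne
  set φ : EuclideanSpace ℝ (Fin d) → ℝ := fun q => Real.sqrt (A q) with hφdef
  have hApos : ∀ x : EuclideanSpace ℝ (Fin d), x ≠ 0 → 0 < A x := by
    intro x hx
    have h := (hAbound x).1
    have hn : 0 < ‖x‖ := norm_pos_iff.mpr hx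
    exact lt_of_lt_of_le (by positivity) h
  have hφC2 : ContDiffOn ℝ 2 φ {x : EuclideanSpace ℝ (Fin d) | x ≠ 0} := by
    intro x hx
    have hA : ContDiffAt ℝ 2 A x := (hAC2 x hx).contDiffAt (hU.mem_nhds hx)
    exact ((Real.contDiffAt_sqrt (ne_of_gt (hApos x hx))).comp x hA).contDiffWithinAt
  have hφdiff : ∀ x : EuclideanSpace ℝ (Fin d), x ≠ 0 → DifferentiableAt ℝ φ x := by
    intro x hx
    exact ((hφC2 x hx).contDiffAt (hU.mem_nhds hx)).differentiableAt (by norm_num)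
  -- Euler identity
  have heuler : ∀ x : EuclideanSpace ℝ (Fin d), x ≠ 0 → fderiv ℝ φ x x = φ x := by
    intro x hx
    have h2 : HasDerivAt (fun t : ℝ => t • x) x 1 := by
      simpa using (hasDerivAt_id (1 : ℝ)).smul_const x
    have hfd : HasFDerivAt φ (fderiv ℝ φ x) ((1 : ℝ) • x) := by
      rw [one_smul]; exact (hφdiff x hx).hasFDerivAt
    have h3 : HasDerivAt (fun t : ℝ => φ (t • x)) (fderiv ℝ φ x x) 1 :=
      by have h := hfd.comp_hasDerivAt (1 : ℝ) h2; exact h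
    have h4 : (fun t : ℝ => φ (t • x)) =ᶠ[nhds (1 : ℝ)] fun t => t * φ x := by
      filter_upwards [eventually_gt_nhds (show (0 : ℝ) < 1 by norm_num)] with t ht
      have hh := hAhom t x ht
      show Real.sqrt (A (t • x)) = t * Real.sqrt (A x)
      rw [hh, Real.sqrt_mul (by positivity), Real.sqrt_sq ht.le]
    have h5 : HasDerivAt (fun t : ℝ => t * φ x) (fderiv ℝ φ x x) 1 :=
      h3.congr_of_eventuallyEq h4.symm
    have h6 : HasDerivAt (fun t : ℝ => t * φ x) (φ x) 1 := by
      simpa using (hasDerivAt_id (1 : ℝ)).mul_const (φ x)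
    exact h5.unique h6
  -- compact annulus
  set S : Set (EuclideanSpace ℝ (Fin d)) :=
      Metric.closedBall 0 1 \ Metric.ball 0 (1 / 4) with hSdef
  have hSc : IsCompact S := (isCompact_closedBall 0 1).diff Metric.isOpen_ball
  have hmemS : ∀ x : EuclideanSpace ℝ (Fin d), 1 / 4 ≤ ‖x‖ → ‖x‖ ≤ 1 → x ∈ S := by
    intro x h1 h2
    simp only [hSdef, Set.mem_diff, Metric.mem_closedBall, Metric.mem_ball, dist_zero_right,
      not_lt]
    exact ⟨h2, h1⟩
  have hSne : ∀ x ∈ S, x ≠ (0 : EuclideanSpace ℝ (Fin d)) := by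
    intro x hx h0
    have h1 : ¬ ‖x‖ < 1 / 4 := by
      intro h
      exact hx.2 (by simpa [Metric.mem_ball, dist_zero_right] using h)
    apply h1; rw [h0]; simpa using (by norm_num : (0:ℝ) < 1/4)
  have hsub : S ⊆ {x : EuclideanSpace ℝ (Fin d) | x ≠ 0} := fun x hx => hSne x hx
  -- bounds on the first and second derivative on S
  obtain ⟨M₀, hM₀⟩ := hSc.exists_bound_of_continuousOn
    ((hφC2.continuousOn_fderiv_of_isOpen hU (by norm_num)).mono hsub)
  set M : ℝ := max M₀ 0 with hMdef
  have hMb : ∀ x ∈ S, ‖fderiv ℝ φ x‖ ≤ M := fun x hx => (hM₀ x hx).trans (le_max_left _ _)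
  have hM0 : 0 ≤ M := le_max_right _ _
  have hφ'C1 : ContDiffOn ℝ 1 (fderiv ℝ φ) {x : EuclideanSpace ℝ (Fin d) | x ≠ 0} :=
    hφC2.fderiv_of_isOpen hU (by norm_num)
  obtain ⟨K₀, hK₀⟩ := hSc.exists_bound_of_continuousOn
    ((hφ'C1.continuousOn_fderiv_of_isOpen hU le_rfl).mono hsub)
  set K : ℝ := max K₀ 0 with hKdef
  have hKb : ∀ x ∈ S, ‖fderiv ℝ (fderiv ℝ φ) x‖ ≤ K := fun x hx =>
    (hK₀ x hx).trans (le_max_left _ _)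
  have hK0 : 0 ≤ K := le_max_right _ _
  have hφ'diff : ∀ x : EuclideanSpace ℝ (Fin d), x ≠ 0 →
      DifferentiableAt ℝ (fderiv ℝ φ) x := fun x hx =>
    ((hφ'C1 x hx).contDiffAt (hU.mem_nhds hx)).differentiableAt one_ne_zero
  -- ψt is between 0 and 1 on [0, ∞)
  have hψmono : MonotoneOn ψt (Set.Ici (0 : ℝ)) :=
    monotoneOn_of_deriv_nonneg (convex_Ici 0) hψt.continuous.continuousOn
      (hψt.differentiable (by simp)).differentiableOn
      (fun x hx => hψtmono x (le_of_lt (by simpa using hx)))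
  have hψ0 : ∀ r : ℝ, 0 ≤ r → 0 ≤ ψt r := by
    intro r hr
    rcases le_or_gt r (1 / 4) with h | h
    · rw [hψt0 r h]
    · rw [← hψt0 (1 / 4) le_rfl]
      exact hψmono (by norm_num) hr h.le
  have hψ1 : ∀ r : ℝ, 0 ≤ r → ψt r ≤ 1 := by
    intro r hr
    rcases le_or_gt (1 / 2) r with h | h
    · rw [hψt1 r h]
    · rw [← hψt1 (1 / 2) le_rfl]
      exact hψmono hr (by norm_num) h.le
  -- gradient vs fderiv
  have hgrad : ∀ x v : EuclideanSpace ℝ (Fin d), ⟪gradient φ x, v⟫ = fderiv ℝ φ x v := by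
    intro x v
    simp [gradient, InnerProductSpace.toDual_symm_apply]
  have hgradnorm : ∀ x : EuclideanSpace ℝ (Fin d), ‖gradient φ x‖ = ‖fderiv ℝ φ x‖ := by
    intro x
    simp [gradient]
  have hsq : Real.sqrt A₁ ≥ 0 := Real.sqrt_nonneg _
  have key : ∀ L s u : ℝ, L ≤ Real.sqrt A₁ + M → 0 ≤ s → 0 ≤ u → 1 / 64 ≤ s + u →
      L ≤ (64 * (Real.sqrt A₁ + M + K) + 1) * (s + u) := by
    intro L s u hL hs hu hsum
    nlinarith [mul_nonneg (show (0:ℝ) ≤ 64 * (Real.sqrt A₁ + M + K) + 1 by nlinarith)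
      (show (0:ℝ) ≤ s + u - 1 / 64 by linarith), hsq, hM0, hK0]
  refine ⟨64 * (Real.sqrt A₁ + M + K) + 1, by nlinarith, ?_⟩
  intro p p' hp hp'
  have hφp : φ p ≤ Real.sqrt A₁ := by
    have h2 := (hAbound p).2
    rw [hp] at h2
    calc φ p ≤ Real.sqrt (A₁ * 1 ^ 2) := Real.sqrt_le_sqrt (by simpa using h2)
      _ = Real.sqrt A₁ := by norm_num
  have hu : (0:ℝ) ≤ 1 - ‖p'‖ := by linarith
  have hs2 : (0:ℝ) ≤ ‖p - p'‖ ^ 2 := sq_nonneg _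
  rcases le_or_gt ‖p'‖ (1 / 4) with hcase0 | hcase1
  · -- cutoff vanishes
    rw [hψt0 _ hcase0]
    have h0 : ‖p'‖ * 0 * ⟪gradient φ p', p⟫ = 0 := by ring
    rw [h0, sub_zero]
    exact key _ _ _ (by linarith) hs2 hu (by linarith)
  · -- p' ∈ S
    have hp'S : p' ∈ S := hmemS p' hcase1.le hp'
    have hin : |⟪gradient φ p', p⟫| ≤ M := by
      have h1 : |⟪gradient φ p', p⟫| ≤ ‖gradient φ p'‖ * ‖p‖ := abs_real_inner_le_norm _ _
      rw [hp, mul_one, hgradnorm] at h1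
      exact h1.trans (hMb _ hp'S)
    have hinl := (abs_le.mp hin).1
    have hinr := (abs_le.mp hin).2
    have hψl := hψ0 ‖p'‖ (norm_nonneg _)
    have hψr := hψ1 ‖p'‖ (norm_nonneg _)
    have hp'0 : (0:ℝ) ≤ ‖p'‖ := norm_nonneg _
    have hc0 : (0:ℝ) ≤ ‖p'‖ * ψt ‖p'‖ := mul_nonneg hp'0 hψl
    have hc1 : ‖p'‖ * ψt ‖p'‖ ≤ 1 := by nlinarith
    -- generic bound on LHS
    have hLHS : φ p - ‖p'‖ * ψt ‖p'‖ * ⟪gradient φ p', p⟫ ≤ Real.sqrt A₁ + M := by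
      nlinarith [mul_nonneg hc0 (show (0:ℝ) ≤ ⟪gradient φ p', p⟫ + M by linarith),
        mul_nonneg (show (0:ℝ) ≤ 1 - ‖p'‖ * ψt ‖p'‖ by linarith) hM0, hφp]
    rcases le_or_gt (1 / 8) ‖p - p'‖ with hfar | hnear
    · have h2 : (1:ℝ) / 64 ≤ ‖p - p'‖ ^ 2 := by nlinarith
      exact key _ _ _ hLHS hs2 hu (by linarith)
    rcases le_or_gt ‖p'‖ (3 / 4) with hmid | hmain
    · exact key _ _ _ hLHS hs2 hu (by linarith)
    · -- main case: ‖p'‖ > 3/4, ‖p - p'‖ < 1/8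
      have hψeq : ψt ‖p'‖ = 1 := hψt1 _ (by linarith)
      have hseg : ∀ x ∈ segment ℝ p' p, x ∈ S ∧ ‖x - p'‖ ≤ ‖p - p'‖ := by
        intro x hx
        obtain ⟨a, b, ha, hb, hab, rfl⟩ := hx
        have hxp' : a • p' + b • p - p' = b • (p - p') := by
          rw [show a = 1 - b by linarith]
          module
        have hnx : ‖a • p' + b • p - p'‖ = b * ‖p - p'‖ := by
          rw [hxp', norm_smul, Real.norm_eq_abs, abs_of_nonneg hb]
        have hble : b * ‖p - p'‖ ≤ ‖p - p'‖ := by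
          nlinarith [norm_nonneg (p - p')]
        have hup : ‖a • p' + b • p‖ ≤ 1 := by
          calc ‖a • p' + b • p‖ ≤ ‖a • p'‖ + ‖b • p‖ := norm_add_le _ _
            _ = a * ‖p'‖ + b * ‖p‖ := by
                rw [norm_smul, norm_smul, Real.norm_eq_abs, Real.norm_eq_abs,
                  abs_of_nonneg ha, abs_of_nonneg hb]
            _ ≤ a * 1 + b * 1 := by
                gcongr
                · rw [hp]
            _ = 1 := by linarith
        have hlow : 1 / 4 ≤ ‖a • p' + b • p‖ := by
          have h1 : ‖p'‖ - ‖a • p' + b • p‖ ≤ ‖p' - (a • p' + b • p)‖ :=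
            norm_sub_norm_le _ _
          rw [← norm_neg (p' - (a • p' + b • p))] at h1
          have h2 : -(p' - (a • p' + b • p)) = a • p' + b • p - p' := by abel
          rw [h2, hnx] at h1
          linarith
        exact ⟨hmemS _ hlow hup, by rw [hnx]; exact hble⟩
      have hconv : Convex ℝ (segment ℝ p' p) := convex_segment _ _
      have hlip : ∀ x ∈ segment ℝ p' p,
          ‖fderiv ℝ φ x - fderiv ℝ φ p'‖ ≤ K * ‖p - p'‖ := by
        intro x hx
        have h1 := hconv.norm_image_sub_le_of_norm_hasFDerivWithin_le
          (f := fderiv ℝ φ) (f' := fun y => fderiv ℝ (fderiv ℝ φ) y) (C := K)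
          (fun y hy => (hφ'diff y (hSne _ (hseg y hy).1)).hasFDerivAt.hasFDerivWithinAt)
          (fun y hy => hKb _ (hseg y hy).1) (left_mem_segment ℝ p' p) hx
        calc ‖fderiv ℝ φ x - fderiv ℝ φ p'‖ ≤ K * ‖x - p'‖ := h1
          _ ≤ K * ‖p - p'‖ := mul_le_mul_of_nonneg_left (hseg x hx).2 hK0
      have htay : ‖(φ p - fderiv ℝ φ p' p) - (φ p' - fderiv ℝ φ p' p')‖ ≤
          K * ‖p - p'‖ * ‖p - p'‖ := by
        have h1 := hconv.norm_image_sub_le_of_norm_hasFDerivWithin_le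
          (f := fun y => φ y - fderiv ℝ φ p' y)
          (f' := fun y => fderiv ℝ φ y - fderiv ℝ φ p') (C := K * ‖p - p'‖)
          (fun y hy => ((hφdiff y (hSne _ (hseg y hy).1)).hasFDerivAt.sub
            (fderiv ℝ φ p').hasFDerivAt).hasFDerivWithinAt)
          (fun y hy => hlip y hy) (left_mem_segment ℝ p' p) (right_mem_segment ℝ p' p)
        exact h1
      have heul : fderiv ℝ φ p' p' = φ p' := heuler p' (hSne _ hp'S)
      have hDp : |fderiv ℝ φ p' p| ≤ M := by
        have h1 : ‖fderiv ℝ φ p' p‖ ≤ ‖fderiv ℝ φ p'‖ * ‖p‖ := (fderiv ℝ φ p').le_opNorm p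
        rw [hp, mul_one, Real.norm_eq_abs] at h1
        exact h1.trans (hMb _ hp'S)
      have htabs : (φ p - fderiv ℝ φ p' p) - (φ p' - fderiv ℝ φ p' p') ≤
          K * ‖p - p'‖ * ‖p - p'‖ := by
        rw [Real.norm_eq_abs] at htay
        linarith [(abs_le.mp htay).2]
      rw [hψeq, hgrad p' p]
      have p1 : (0:ℝ) ≤ (64 * (Real.sqrt A₁ + M + K) + 1 - K) * (‖p - p'‖ * ‖p - p'‖) :=
        mul_nonneg (by nlinarith) (mul_self_nonneg _)
      have p2 : (0:ℝ) ≤ (64 * (Real.sqrt A₁ + M + K) + 1 - M) * (1 - ‖p'‖) :=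
        mul_nonneg (by nlinarith) hu
      have p3 : (0:ℝ) ≤ (1 - ‖p'‖) * (M - fderiv ℝ φ p' p) :=
        mul_nonneg hu (by linarith [(abs_le.mp hDp).2])
      nlinarith [htabs, heul, p1, p2, p3]
end
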